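/- Let n ≥ 4 be an even integer and let c be a real number with 1 − 4/(n+1)² < c ≤ 1. Let f be a normalized analytic function on 𝔻 with f(z) ≠ 0 for all z ∈ 𝔻 \ {0}, and suppose the function p defined by p(z) = z f'(z)/f(z) for z ≠ 0 and p(0) = 1 is subordinate to ψ(z) = √(1+cz). Then for every z with 0 < |z| < (n² + 2n − 3)/(c(n+1)²), one has z f'(z)/f(z) ∈ Ω_{nL}. (This is the S*_{nL}-radius of the class S*(√(1+cz)).) -/

import Mathlib

open Complex Metric Set

/-- The function φ_{nL}(z) = 1 + n z/(n+1) + z^n/(n+1). -/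
noncomputable def phinL (n : ℕ) (z : ℂ) : ℂ :=
  1 + (n : ℂ) * z / ((n : ℂ) + 1) + z ^ n / ((n : ℂ) + 1)

/-- Ω_{nL} = φ_{nL}(𝔻), the image of the open unit disk. -/
def OmeganL (n : ℕ) : Set ℂ := phinL n '' ball (0 : ℂ) 1

/-- f is analytic on the unit disk with f(0) = 0 and f'(0) = 1. -/
def IsNormalizedAnalytic (f : ℂ → ℂ) : Prop :=
  AnalyticOnNhd ℂ f (ball (0 : ℂ) 1) ∧ f 0 = 0 ∧ deriv f 0 = 1

/-- p is subordinate to ψ on the unit disk. -/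
def Subord (p ψ : ℂ → ℂ) : Prop :=
  ∃ ω : ℂ → ℂ, AnalyticOnNhd ℂ ω (ball (0 : ℂ) 1) ∧ ω 0 = 0 ∧
    (∀ z ∈ ball (0 : ℂ) 1, ω z ∈ ball (0 : ℂ) 1) ∧
    (∀ z ∈ ball (0 : ℂ) 1, p z = ψ (ω z))

/-- Membership in the class S*_{nL}. -/
def MemSnL (n : ℕ) (f : ℂ → ℂ) : Prop :=
  IsNormalizedAnalytic f ∧ (∀ z ∈ ball (0 : ℂ) 1, z ≠ 0 → f z ≠ 0) ∧
  Subord (fun z => if z = 0 then 1 else z * deriv f z / f z) (phinL n)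

/-!
By Schwarz's lemma, `p z = √(1 + c w)` with `‖w‖ ≤ ‖z‖`. For `‖u‖ < 1 - t²` the principal root
`s = √(1 + u)` has `Re s > t`, hence `‖s - 1‖ = ‖u‖ / ‖s + 1‖ < (1 - t²) / (1 + t) = 1 - t`.
With `t = 2 / (n + 1)` the radius bound is exactly `c ‖z‖ < 1 - t²`, so `p z` lies in the disk
`‖w - 1‖ < (n - 1) / (n + 1)`. This disk lies in `Ω_{nL}`: on the unit circle
`‖φ_{nL} ζ - 1‖ = ‖n ζ + ζⁿ‖ / (n + 1) ≥ (n - 1) / (n + 1)`, and `φ_{nL}` is an open map, so the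
part of the disk outside `φ_{nL}(𝔻)` would be relatively clopen.
-/

lemma DiffContOnCl.ball_subset_image_ball {f : ℂ → ℂ} {z₀ : ℂ} {R r : ℝ}
    (hf : DiffContOnCl ℂ f (ball z₀ R)) (hR : 0 < R)
    (hr : ∀ z ∈ sphere z₀ R, r ≤ ‖f z - f z₀‖) :
    ball (f z₀) r ⊆ f '' ball z₀ R := by
  rcases le_or_gt r 0 with hr0 | hr0
  · simp [ball_eq_empty.2 hr0]
  have hcont : ContinuousOn f (closedBall z₀ R) := closure_ball z₀ hR.ne' ▸ hf.continuousOn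
  have hclosure : closure (f '' ball z₀ R) ⊆ f '' closedBall z₀ R :=
    closure_minimal (image_mono ball_subset_closedBall)
      ((isCompact_closedBall z₀ R).image_of_continuousOn hcont).isClosed
  rcases (hf.differentiableOn.analyticOnNhd isOpen_ball).is_constant_or_isOpen
      (convex_ball z₀ R).isPreconnected with ⟨w, hw⟩ | hopen
  · have hedge : z₀ + R ∈ sphere z₀ R := by simp [abs_of_pos hR]
    have hfedge : f (z₀ + R) = w := by
      have hmem := ((hcont _ (sphere_subset_closedBall hedge)).mono
        ball_subset_closedBall).mem_closure_image
          (by rw [closure_ball z₀ hR.ne']; exact sphere_subset_closedBall hedge)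
      simpa using closure_mono (image_subset_iff.2 hw : f '' ball z₀ R ⊆ {w}) hmem
    have := hr _ hedge
    rw [hfedge, hw z₀ (mem_ball_self hR), sub_self, norm_zero] at this
    linarith
  · refine (convex_ball _ _).isPreconnected.subset_of_closure_inter_subset
      (hopen _ Subset.rfl isOpen_ball) ⟨f z₀, mem_ball_self hr0, z₀, mem_ball_self hR, rfl⟩ ?_
    rintro _ ⟨hw, hwr⟩
    obtain ⟨z, hz, rfl⟩ := hclosure hw
    rcases (mem_closedBall.1 hz).lt_or_eq with hlt | heq
    · exact ⟨z, hlt, rfl⟩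
    · exact absurd (hr z heq) (not_le.2 (mem_ball_iff_norm.1 hwr))

lemma norm_cpow_one_half_sub_one_lt {t : ℝ} (ht : 0 ≤ t) {u : ℂ} (hu : ‖u‖ < 1 - t ^ 2) :
    ‖(1 + u) ^ ((1 : ℂ) / 2) - 1‖ < 1 - t := by
  set s := (1 + u) ^ ((1 : ℂ) / 2)
  have hsq : s ^ 2 = 1 + u := by
    simp only [s, one_div]
    exact cpow_ofNat_inv_pow (1 + u) 2
  have hre : t ≤ s.re := by
    rw [show s.re = √((‖1 + u‖ + (1 + u).re) / 2) by simp only [s, one_div, cpow_inv_two_re]]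
    apply Real.le_sqrt_of_sq_le
    have h1 : 1 - ‖u‖ ≤ ‖1 + u‖ := by simpa using norm_sub_norm_le (1 : ℂ) (-u)
    have h2 : -‖u‖ ≤ u.re := neg_le_of_abs_le (abs_re_le_norm u)
    simp only [add_re, one_re]
    linarith
  have hs1 : 1 + t ≤ ‖s + 1‖ := by
    have := re_le_norm (s + 1)
    rw [add_re, one_re] at this
    linarith
  have hs1pos : 0 < ‖s + 1‖ := by linarith
  calc ‖s - 1‖ = ‖u‖ / ‖s + 1‖ := by
        rw [eq_div_iff hs1pos.ne', ← norm_mul]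
        congr 1
        linear_combination hsq
    _ ≤ ‖u‖ / (1 + t) := div_le_div_of_nonneg_left (norm_nonneg _) (by linarith) hs1
    _ < (1 - t ^ 2) / (1 + t) := by gcongr
    _ = 1 - t := by field_simp; ring

lemma div_le_norm_phinL_sub_one (n : ℕ) {ζ : ℂ} (hζ : ‖ζ‖ = 1) :
    ((n : ℝ) - 1) / ((n : ℝ) + 1) ≤ ‖phinL n ζ - 1‖ := by
  have hN : ‖(n : ℂ) + 1‖ = (n : ℝ) + 1 := by exact_mod_cast Complex.norm_natCast (n + 1)
  have hnum : (n : ℝ) - 1 ≤ ‖(n : ℂ) * ζ + ζ ^ n‖ := by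
    simpa [norm_pow, hζ] using norm_sub_norm_le ((n : ℂ) * ζ) (-ζ ^ n)
  rw [show phinL n ζ - 1 = ((n : ℂ) * ζ + ζ ^ n) / ((n : ℂ) + 1) by
      rw [phinL]; field_simp; ring,
    norm_div, hN]
  gcongr

lemma ball_subset_OmeganL {n : ℕ} (hn : n ≠ 0) :
    ball (1 : ℂ) (((n : ℝ) - 1) / ((n : ℝ) + 1)) ⊆ OmeganL n := by
  have h0 : phinL n 0 = 1 := by simp [phinL, hn]
  have hdiff : Differentiable ℂ (phinL n) := by unfold phinL; fun_prop
  simpa [h0, OmeganL] using hdiff.diffContOnCl.ball_subset_image_ball (z₀ := 0) one_pos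
    fun ζ hζ => h0 ▸ div_le_norm_phinL_sub_one n (by simpa using hζ)

lemma Subord.exists_norm_le {p ψ : ℂ → ℂ} (h : Subord p ψ) {z : ℂ} (hz : ‖z‖ < 1) :
    ∃ w, ‖w‖ ≤ ‖z‖ ∧ p z = ψ w := by
  obtain ⟨ω, hω, hω0, hωmaps, hpω⟩ := h
  exact ⟨ω z, norm_le_norm_of_mapsTo_ball hω.differentiableOn
    (fun x hx => ball_subset_closedBall (hωmaps x hx)) hω0 hz, hpω z (mem_ball_zero_iff.2 hz)⟩

lemma Subord.norm_sub_one_lt_of_cpow_one_half {p : ℂ → ℂ} {c t : ℝ}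
    (hsub : Subord p fun z => (1 + (c : ℂ) * z) ^ ((1 : ℂ) / 2)) (hc : 0 ≤ c) (ht : 0 ≤ t)
    {z : ℂ} (hz : ‖z‖ < 1) (hcz : c * ‖z‖ < 1 - t ^ 2) :
    ‖p z - 1‖ < 1 - t := by
  obtain ⟨w, hwz, hpw⟩ := hsub.exists_norm_le hz
  rw [hpw]
  refine norm_cpow_one_half_sub_one_lt ht (lt_of_le_of_lt ?_ hcz)
  rw [norm_mul, norm_real, Real.norm_of_nonneg hc]
  gcongr

theorem stmt16_general (n : ℕ) (hn : 4 ≤ n) (c : ℝ)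
    (hc1 : 1 - 4 / ((n : ℝ) + 1) ^ 2 < c)
    (f : ℂ → ℂ)
    (hsub : Subord (fun z => if z = 0 then 1 else z * deriv f z / f z)
      (fun z => (1 + (c : ℂ) * z) ^ ((1 : ℂ) / 2))) :
    ∀ z : ℂ, 0 < ‖z‖ →
      ‖z‖ < ((n : ℝ) ^ 2 + 2 * (n : ℝ) - 3) / (c * ((n : ℝ) + 1) ^ 2) →
      z * deriv f z / f z ∈ OmeganL n := by
  intro z hz0 hzρ
  have hn4 : (4 : ℝ) ≤ n := by exact_mod_cast hn
  set t : ℝ := 2 / ((n : ℝ) + 1) with ht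
  have hct : 1 - t ^ 2 < c := by convert hc1 using 2; rw [ht, div_pow]; norm_num
  have ht1 : t < 1 := (div_lt_one (by linarith)).2 (by linarith)
  have hc0 : 0 < c := by nlinarith [show 0 ≤ t by positivity]
  have hcz : c * ‖z‖ < 1 - t ^ 2 := by
    rw [show ((n : ℝ) ^ 2 + 2 * (n : ℝ) - 3) / (c * ((n : ℝ) + 1) ^ 2) = (1 - t ^ 2) / c by
      rw [ht]; field_simp; ring, lt_div_iff₀ hc0] at hzρ
    linarith
  have hz1 : ‖z‖ < 1 := by nlinarith
  have hdisk := hsub.norm_sub_one_lt_of_cpow_one_half hc0.le (by positivity) hz1 hcz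
  rw [if_neg (norm_pos_iff.1 hz0)] at hdisk
  refine ball_subset_OmeganL (by omega) (mem_ball_iff_norm.2 (hdisk.trans_eq ?_))
  rw [ht]
  field_simp
  ring

theorem stmt16 (n : ℕ) (hn : 4 ≤ n) (hne : Even n) (c : ℝ)
    (hc1 : 1 - 4 / ((n : ℝ) + 1) ^ 2 < c) (hc2 : c ≤ 1)
    (f : ℂ → ℂ) (hf : IsNormalizedAnalytic f)
    (hfz : ∀ z ∈ ball (0 : ℂ) 1, z ≠ 0 → f z ≠ 0)
    (hsub : Subord (fun z => if z = 0 then 1 else z * deriv f z / f z)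
      (fun z => (1 + (c : ℂ) * z) ^ ((1 : ℂ) / 2))) :
    ∀ z : ℂ, 0 < ‖z‖ →
      ‖z‖ < ((n : ℝ) ^ 2 + 2 * (n : ℝ) - 3) / (c * ((n : ℝ) + 1) ^ 2) →
      z * deriv f z / f z ∈ OmeganL n :=
  stmt16_general n hn c hc1 f hsub
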